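/- Let X₁, …, X_n be normed spaces, (Y,d) a metric space, a = (a₁, …, a_n) ∈ X₁ × ⋯ × X_n, and let p₁, p₂, q₁, q₂ satisfy condition (★) with p₁ < p₂, and set α = q₂p₁/(q₁p₂). Every arbitrary map f : X₁ × ⋯ × X_n → Y which is strongly ((q₁,1),p₁)-summing at a is strongly ((q₂,α),p₂)-summing at a. -/

import Mathlib

/-!
With `σⱼ = d(f(a + xⱼ), f(a))`, test the hypothesis on the family in which `xⱼ` is repeated
according to the weight `σⱼ ^ (q₂ - q₁)`. Since `f` is arbitrary, weights can only be realised
by repetition; rounding them up to integers costs a factor `2`. The left side becomes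
`A = ∑ σⱼ ^ q₂`, while Hölder's inequality with exponents `q₂ / (q₂ - q₁)` and `q₂ / q₁`, followed
by `ℓ^{p₂} ⊆ ℓ^{p₁ q₂ / q₁}` (this is where `(★)` enters, as `q₁ p₂ ≤ p₁ q₂`), bounds each
weighted sum on the right by `A ^ (1 - q₁ / q₂) * (∑ |φ(xⱼ)| ^ p₂) ^ (p₁ / p₂)`.
Dividing by `A ^ (1 - q₁ / q₂)` and raising to the power `p₂ / p₁` gives the claim.
-/

open scoped BigOperators

/-- An arbitrary map `f : X₁ × ⋯ × X_n → Y` from a product of normed spaces to a metric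
space is strongly `((q,α),p)`-summing at `a = (a₁,…,aₙ)` if there is `C ≥ 0` with
`(∑ⱼ d(f(a+xⱼ), f(a))^q)^{1/α} ≤ C ⋅ sup_{φ∈B} ∑ⱼ |φ(xⱼ¹,…,xⱼⁿ)|^p` for all finite
families, where `B` is the closed unit ball of the space of continuous `n`-linear scalar
forms on `X₁ × ⋯ × X_n`. -/
def MapStronglySummingAt {𝕜 : Type*} [RCLike 𝕜] {n : ℕ} {X : Fin n → Type*}
    [∀ i, NormedAddCommGroup (X i)] [∀ i, NormedSpace 𝕜 (X i)]
    {Y : Type*} [MetricSpace Y]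
    (q α p : ℝ) (f : (∀ i, X i) → Y) (a : ∀ i, X i) : Prop :=
  ∃ C : ℝ, 0 ≤ C ∧ ∀ (m : ℕ) (x : Fin m → ∀ i, X i),
    (∑ j, dist (f (a + x j)) (f a) ^ q) ^ (1 / α) ≤
      C * ⨆ φ : {φ : ContinuousMultilinearMap 𝕜 X 𝕜 // ‖φ‖ ≤ 1},
        ∑ j, ‖φ.1 (x j)‖ ^ p

open Finset Real

theorem Real.sum_rpow_le_rpow_sum {ι : Type*} (s : Finset ι) {a : ι → ℝ} (ha : ∀ i ∈ s, 0 ≤ a i)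
    {r : ℝ} (hr : 1 ≤ r) : ∑ i ∈ s, a i ^ r ≤ (∑ i ∈ s, a i) ^ r := by
  have hsum : 0 ≤ ∑ i ∈ s, a i := sum_nonneg ha
  calc ∑ i ∈ s, a i ^ r = ∑ i ∈ s, a i * a i ^ (r - 1) := by
        refine sum_congr rfl fun i hi => ?_
        rw [← rpow_one_add' (ha i hi) (by linarith), add_sub_cancel]
    _ ≤ ∑ i ∈ s, a i * (∑ j ∈ s, a j) ^ (r - 1) := by
        refine sum_le_sum fun i hi => mul_le_mul_of_nonneg_left ?_ (ha i hi)
        exact rpow_le_rpow (ha i hi) (single_le_sum ha hi) (by linarith)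
    _ = (∑ i ∈ s, a i) ^ r := by
        rw [← sum_mul, ← rpow_one_add' hsum (by linarith), add_sub_cancel]

theorem Real.sum_rpow_mul_rpow_le {ι : Type*} (s : Finset ι) {a b : ι → ℝ}
    (ha : ∀ i ∈ s, 0 ≤ a i) (hb : ∀ i ∈ s, 0 ≤ b i) {p₁ p₂ q₁ q₂ : ℝ}
    (hq₁ : 0 < q₁) (hq : q₁ < q₂) (hp₂ : 0 < p₂) (hqp : q₁ * p₂ ≤ p₁ * q₂) :
    ∑ i ∈ s, a i ^ (q₂ - q₁) * b i ^ p₁ ≤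
      (∑ i ∈ s, a i ^ q₂) ^ (1 - q₁ / q₂) * (∑ i ∈ s, b i ^ p₂) ^ (p₁ / p₂) := by
  have hq₂ : 0 < q₂ := hq₁.trans hq
  have hr : 1 ≤ p₁ * q₂ / (q₁ * p₂) := by rw [le_div_iff₀ (by positivity)]; linarith
  have hconj : (q₂ / (q₂ - q₁)).HolderConjugate (q₂ / q₁) := by
    rw [holderConjugate_iff, lt_div_iff₀ (by linarith)]
    refine ⟨by linarith, ?_⟩
    field_simp
    ring
  have hHolder := inner_le_Lp_mul_Lq_of_nonneg s hconj
    (fun i hi => rpow_nonneg (ha i hi) (q₂ - q₁)) (fun i hi => rpow_nonneg (hb i hi) p₁)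
  have ha' : ∀ i ∈ s, (a i ^ (q₂ - q₁)) ^ (q₂ / (q₂ - q₁)) = a i ^ q₂ := fun i hi => by
    rw [← rpow_mul (ha i hi), mul_div_cancel₀ _ (by linarith)]
  have hb' : ∀ i ∈ s, (b i ^ p₁) ^ (q₂ / q₁) = (b i ^ p₂) ^ (p₁ * q₂ / (q₁ * p₂)) := fun i hi => by
    rw [← rpow_mul (hb i hi), ← rpow_mul (hb i hi)]
    congr 1
    field_simp
  rw [sum_congr rfl ha', sum_congr rfl hb'] at hHolder
  calc _ ≤ _ := hHolder
    _ ≤ (∑ i ∈ s, a i ^ q₂) ^ (1 / (q₂ / (q₂ - q₁))) *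
          ((∑ i ∈ s, b i ^ p₂) ^ (p₁ * q₂ / (q₁ * p₂))) ^ (1 / (q₂ / q₁)) := by
        refine mul_le_mul_of_nonneg_left (rpow_le_rpow ?_ ?_ (by positivity))
          (rpow_nonneg (sum_nonneg fun i hi => rpow_nonneg (ha i hi) q₂) _)
        · exact sum_nonneg fun i hi => rpow_nonneg (rpow_nonneg (hb i hi) p₂) _
        · exact sum_rpow_le_rpow_sum s (fun i hi => rpow_nonneg (hb i hi) p₂) hr
    _ = _ := by
        rw [← rpow_mul (sum_nonneg fun i hi => rpow_nonneg (hb i hi) p₂)]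
        congr 2
        · field_simp
        · field_simp

theorem Real.rpow_le_of_le_mul_rpow_one_sub {A K θ : ℝ} (hA : 0 ≤ A) (hK : 0 ≤ K) (hθ : 0 < θ)
    (h : A ≤ K * A ^ (1 - θ)) : A ^ θ ≤ K := by
  rcases hA.eq_or_lt with rfl | hA
  · rwa [zero_rpow hθ.ne']
  · rw [rpow_sub hA, rpow_one, mul_div_assoc', le_div_iff₀ (rpow_pos_of_pos hA θ)] at h
    exact le_of_mul_le_mul_left (by linarith) hA

section Repetition

variable {V Φ : Type*} {s : V → ℝ} {t : Φ → V → ℝ} {C : ℝ}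

theorem sum_le_mul_iSup_of_fintype
    (h : ∀ (m : ℕ) (x : Fin m → V), ∑ j, s (x j) ≤ C * ⨆ φ, ∑ j, t φ (x j))
    {ι : Type*} [Fintype ι] (x : ι → V) :
    ∑ i, s (x i) ≤ C * ⨆ φ, ∑ i, t φ (x i) := by
  let e := Fintype.equivFin ι
  calc ∑ i, s (x i) = ∑ k, s (x (e.symm k)) := (e.symm.sum_comp _).symm
    _ ≤ C * ⨆ φ, ∑ k, t φ (x (e.symm k)) := h _ _
    _ = C * ⨆ φ, ∑ i, t φ (x i) := by
        congr 1
        exact iSup_congr fun φ => e.symm.sum_comp fun i => t φ (x i)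

theorem sum_natCast_mul_le_mul_iSup
    (h : ∀ (m : ℕ) (x : Fin m → V), ∑ j, s (x j) ≤ C * ⨆ φ, ∑ j, t φ (x j))
    {ι : Type*} [Fintype ι] (x : ι → V) (N : ι → ℕ) :
    ∑ i, (N i : ℝ) * s (x i) ≤ C * ⨆ φ, ∑ i, (N i : ℝ) * t φ (x i) := by
  simpa only [Fintype.sum_sigma, sum_const, card_univ, Fintype.card_fin, nsmul_eq_mul] using
    sum_le_mul_iSup_of_fintype h fun k : Σ i, Fin (N i) => x k.1

theorem sum_mul_le_two_mul_mul_iSup (hC : 0 ≤ C) (hs : ∀ v, 0 ≤ s v) (ht : ∀ φ v, 0 ≤ t φ v)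
    (hbdd : ∀ v, BddAbove (Set.range fun φ => t φ v))
    (h : ∀ (m : ℕ) (x : Fin m → V), ∑ j, s (x j) ≤ C * ⨆ φ, ∑ j, t φ (x j))
    {ι : Type*} [Fintype ι] (x : ι → V) {w : ι → ℝ} (hw : ∀ i, 0 ≤ w i) :
    ∑ i, w i * s (x i) ≤ 2 * C * ⨆ φ, ∑ i, w i * t φ (x i) := by
  choose b hb using hbdd
  -- Scaling by `M` makes every positive weight at least `1`, so that rounding it up to a
  -- natural number at most doubles it.
  set M := 1 + ∑ i, (w i)⁻¹
  have hM : 0 < M := add_pos_of_pos_of_nonneg one_pos (sum_nonneg fun i _ => inv_nonneg.2 (hw i))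
  set N : ι → ℕ := fun i => ⌈M * w i⌉₊
  have hN_le : ∀ i, (N i : ℝ) ≤ 2 * M * w i := by
    intro i
    rcases (hw i).eq_or_lt with hi | hi
    · simp [N, ← hi]
    · have : 1 ≤ M * w i := calc
        1 = (w i)⁻¹ * w i := (inv_mul_cancel₀ hi.ne').symm
        _ ≤ M * w i := by
          gcongr
          exact le_add_of_nonneg_of_le zero_le_one
            (single_le_sum (fun j _ => inv_nonneg.2 (hw j)) (mem_univ i))
      linarith [Nat.ceil_lt_add_one (mul_nonneg hM.le hi.le)]
  have hsup : ⨆ φ, ∑ i, (N i : ℝ) * t φ (x i) ≤ 2 * M * ⨆ φ, ∑ i, w i * t φ (x i) := by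
    have hbdd' : BddAbove (Set.range fun φ => ∑ i, w i * t φ (x i)) := by
      refine ⟨∑ i, w i * b (x i), ?_⟩
      rintro _ ⟨φ, rfl⟩
      exact sum_le_sum fun i _ => mul_le_mul_of_nonneg_left (hb _ ⟨φ, rfl⟩) (hw i)
    refine Real.iSup_le (fun φ => ?_) (mul_nonneg (by positivity)
      (Real.iSup_nonneg fun φ => sum_nonneg fun i _ => mul_nonneg (hw i) (ht φ _)))
    calc ∑ i, (N i : ℝ) * t φ (x i) ≤ ∑ i, 2 * M * w i * t φ (x i) :=
          sum_le_sum fun i _ => mul_le_mul_of_nonneg_right (hN_le i) (ht φ _)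
      _ = 2 * M * ∑ i, w i * t φ (x i) := by simp only [mul_sum, mul_assoc]
      _ ≤ 2 * M * ⨆ φ, ∑ i, w i * t φ (x i) := by gcongr; exact le_ciSup hbdd' φ
  calc ∑ i, w i * s (x i) = M⁻¹ * ∑ i, M * w i * s (x i) := by
        simp only [mul_sum, ← mul_assoc, inv_mul_cancel₀ hM.ne', one_mul]
    _ ≤ M⁻¹ * ∑ i, (N i : ℝ) * s (x i) := by
        gcongr with i
        · exact hs _
        · exact Nat.le_ceil _
    _ ≤ M⁻¹ * (C * (2 * M * ⨆ φ, ∑ i, w i * t φ (x i))) := by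
        gcongr
        exact (sum_natCast_mul_le_mul_iSup h x N).trans (by gcongr)
    _ = 2 * C * ⨆ φ, ∑ i, w i * t φ (x i) := by field_simp

end Repetition

theorem rpow_sum_rpow_le_two_mul_mul_iSup_rpow {V Φ : Type*} {σ : V → ℝ} {τ : Φ → V → ℝ}
    {C p₁ p₂ q₁ q₂ : ℝ} (hσ : ∀ v, 0 ≤ σ v) (hτ : ∀ φ v, 0 ≤ τ φ v)
    (hbdd : ∀ v, BddAbove (Set.range fun φ => τ φ v)) (hC : 0 ≤ C) (hp₁ : 0 < p₁)
    (hp₂ : 0 < p₂) (hq₁ : 0 < q₁) (hq : q₁ < q₂) (hqp : q₁ * p₂ ≤ p₁ * q₂)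
    (h : ∀ (m : ℕ) (x : Fin m → V), ∑ j, σ (x j) ^ q₁ ≤ C * ⨆ φ, ∑ j, τ φ (x j) ^ p₁)
    {ι : Type*} [Fintype ι] (x : ι → V) :
    (∑ i, σ (x i) ^ q₂) ^ (q₁ / q₂) ≤ 2 * C * (⨆ φ, ∑ i, τ φ (x i) ^ p₂) ^ (p₁ / p₂) := by
  choose b hb using hbdd
  have hτ_le : ∀ φ v, τ φ v ≤ b v := fun φ v => hb v ⟨φ, rfl⟩
  set A := ∑ i, σ (x i) ^ q₂
  set S := ⨆ φ, ∑ i, τ φ (x i) ^ p₂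
  have hA : 0 ≤ A := sum_nonneg fun i _ => rpow_nonneg (hσ _) _
  have hS : 0 ≤ S := Real.iSup_nonneg fun φ => sum_nonneg fun i _ => rpow_nonneg (hτ φ _) _
  have hweighted := sum_mul_le_two_mul_mul_iSup hC (fun v => rpow_nonneg (hσ v) q₁)
    (fun φ v => rpow_nonneg (hτ φ v) p₁)
    (fun v => ⟨b v ^ p₁, by rintro _ ⟨φ, rfl⟩; exact rpow_le_rpow (hτ φ v) (hτ_le φ v) hp₁.le⟩)
    h x (w := fun i => σ (x i) ^ (q₂ - q₁)) fun i => rpow_nonneg (hσ _) _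
  have hlhs : ∑ i, σ (x i) ^ (q₂ - q₁) * σ (x i) ^ q₁ = A := sum_congr rfl fun i _ => by
    rw [← rpow_add' (hσ _) (by linarith), sub_add_cancel]
  have hHolder : ⨆ φ, ∑ i, σ (x i) ^ (q₂ - q₁) * τ φ (x i) ^ p₁ ≤
      A ^ (1 - q₁ / q₂) * S ^ (p₁ / p₂) := by
    have hbdd' : BddAbove (Set.range fun φ => ∑ i, τ φ (x i) ^ p₂) := by
      refine ⟨∑ i, b (x i) ^ p₂, ?_⟩
      rintro _ ⟨φ, rfl⟩
      exact sum_le_sum fun i _ => rpow_le_rpow (hτ φ _) (hτ_le φ _) hp₂.le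
    refine Real.iSup_le (fun φ => ?_) (mul_nonneg (rpow_nonneg hA _) (rpow_nonneg hS _))
    calc _ ≤ A ^ (1 - q₁ / q₂) * (∑ i, τ φ (x i) ^ p₂) ^ (p₁ / p₂) :=
          sum_rpow_mul_rpow_le _ (fun i _ => hσ _) (fun i _ => hτ φ _) hq₁ hq hp₂ hqp
      _ ≤ A ^ (1 - q₁ / q₂) * S ^ (p₁ / p₂) := by
          refine mul_le_mul_of_nonneg_left (rpow_le_rpow ?_ (le_ciSup hbdd' φ) (div_pos hp₁ hp₂).le)
            (rpow_nonneg hA _)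
          exact sum_nonneg fun i _ => rpow_nonneg (hτ φ _) _
  refine rpow_le_of_le_mul_rpow_one_sub hA (by positivity) (div_pos hq₁ (hq₁.trans hq)) ?_
  calc A = ∑ i, σ (x i) ^ (q₂ - q₁) * σ (x i) ^ q₁ := hlhs.symm
    _ ≤ 2 * C * ⨆ φ, ∑ i, σ (x i) ^ (q₂ - q₁) * τ φ (x i) ^ p₁ := hweighted
    _ ≤ 2 * C * (A ^ (1 - q₁ / q₂) * S ^ (p₁ / p₂)) := by gcongr
    _ = 2 * C * S ^ (p₁ / p₂) * A ^ (1 - q₁ / q₂) := by ring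

theorem lt_of_one_div_sub_one_div_le {p₁ p₂ q₁ q₂ : ℝ} (hp₁ : 0 < p₁) (hq₁ : 0 < q₁) (hq₂ : 0 < q₂)
    (hlt : p₁ < p₂) (hstar : 1 / p₁ - 1 / q₁ ≤ 1 / p₂ - 1 / q₂) : q₁ < q₂ := by
  have : 1 / p₂ < 1 / p₁ := one_div_lt_one_div_of_lt hp₁ hlt
  exact (one_div_lt_one_div hq₂ hq₁).1 (by linarith)

theorem mul_le_mul_of_one_div_sub_one_div_le {p₁ p₂ q₁ q₂ : ℝ} (hp₁ : 0 < p₁) (hq₁ : 0 < q₁)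
    (hp₂ : 0 < p₂) (hq₂ : 0 < q₂) (hpq₁ : p₁ ≤ q₁) (hlt : p₁ < p₂)
    (hstar : 1 / p₁ - 1 / q₁ ≤ 1 / p₂ - 1 / q₂) : q₁ * p₂ ≤ p₁ * q₂ := by
  rw [div_sub_div _ _ hp₁.ne' hq₁.ne', div_sub_div _ _ hp₂.ne' hq₂.ne',
    div_le_div_iff₀ (by positivity) (by positivity)] at hstar
  nlinarith [mul_nonneg (mul_nonneg hq₂.le (sub_nonneg.2 hpq₁)) (sub_nonneg.2 hlt.le)]

theorem stmt9_general {𝕜 : Type*} [RCLike 𝕜] {n : ℕ} {X : Fin n → Type*}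
    [∀ i, NormedAddCommGroup (X i)] [∀ i, NormedSpace 𝕜 (X i)]
    {Y : Type*} [MetricSpace Y]
    (p₁ p₂ q₁ q₂ : ℝ)
    (hp₁ : 1 ≤ p₁) (hq₁ : 1 ≤ q₁)
    (hpq₁ : p₁ ≤ q₁) (hpq₂ : p₂ ≤ q₂)
    (hstar : 1 / p₁ - 1 / q₁ ≤ 1 / p₂ - 1 / q₂)
    (hlt : p₁ < p₂)
    (f : (∀ i, X i) → Y) (a : ∀ i, X i)
    (hf : MapStronglySummingAt (𝕜 := 𝕜) q₁ 1 p₁ f a) :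
    MapStronglySummingAt (𝕜 := 𝕜) q₂ (q₂ * p₁ / (q₁ * p₂)) p₂ f a := by
  obtain ⟨C, hC, hCf⟩ := hf
  have hp₂ : 0 < p₂ := by linarith
  have hq₂ : 0 < q₂ := by linarith
  have hq := lt_of_one_div_sub_one_div_le (by linarith) (by linarith) hq₂ hlt hstar
  have hqp :=
    mul_le_mul_of_one_div_sub_one_div_le (by linarith) (by linarith) hp₂ hq₂ hpq₁ hlt hstar
  refine ⟨(2 * C) ^ (p₂ / p₁), by positivity, fun m x => ?_⟩
  have key := rpow_sum_rpow_le_two_mul_mul_iSup_rpow (σ := fun v => dist (f (a + v)) (f a))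
    (fun _ => dist_nonneg)
    (fun (φ : {φ : ContinuousMultilinearMap 𝕜 X 𝕜 // ‖φ‖ ≤ 1}) v => norm_nonneg (φ.1 v))
    (fun v => ⟨∏ i, ‖v i‖, by
      rintro _ ⟨φ, rfl⟩
      exact (φ.1.le_of_opNorm_le φ.2 v).trans_eq (one_mul _)⟩)
    hC (by linarith) hp₂ (by linarith) hq hqp (by simpa only [div_one, rpow_one] using hCf) x
  set S := ⨆ φ : {φ : ContinuousMultilinearMap 𝕜 X 𝕜 // ‖φ‖ ≤ 1}, ∑ j, ‖φ.1 (x j)‖ ^ p₂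
  have hS : 0 ≤ S := Real.iSup_nonneg fun φ => sum_nonneg fun j _ => rpow_nonneg (norm_nonneg _) _
  calc _ = ((∑ j, dist (f (a + x j)) (f a) ^ q₂) ^ (q₁ / q₂)) ^ (p₂ / p₁) := by
        rw [← rpow_mul (sum_nonneg fun j _ => rpow_nonneg dist_nonneg _)]
        congr 1
        field_simp
    _ ≤ (2 * C * S ^ (p₁ / p₂)) ^ (p₂ / p₁) := by gcongr
    _ = (2 * C) ^ (p₂ / p₁) * S := by
        rw [mul_rpow (by positivity) (by positivity), ← rpow_mul hS,
          div_mul_div_cancel₀ hp₂.ne', div_self (by positivity), rpow_one]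

/-- If `p₁, p₂, q₁, q₂` satisfy condition (★) with `p₁ < p₂` and
`α = q₂p₁/(q₁p₂)`, then every arbitrary map `f : X₁ × ⋯ × X_n → Y` which is strongly
`((q₁,1),p₁)`-summing at `a` is strongly `((q₂,α),p₂)`-summing at `a`. -/
theorem stmt9 {𝕜 : Type*} [RCLike 𝕜] {n : ℕ} {X : Fin n → Type*}
    [∀ i, NormedAddCommGroup (X i)] [∀ i, NormedSpace 𝕜 (X i)]
    {Y : Type*} [MetricSpace Y]
    (p₁ p₂ q₁ q₂ : ℝ)
    (hp₁ : 1 ≤ p₁) (hp₁₂ : p₁ ≤ p₂) (hq₁ : 1 ≤ q₁) (hq₁₂ : q₁ ≤ q₂)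
    (hpq₁ : p₁ ≤ q₁) (hpq₂ : p₂ ≤ q₂)
    (hstar : 1 / p₁ - 1 / q₁ ≤ 1 / p₂ - 1 / q₂)
    (hlt : p₁ < p₂)
    (f : (∀ i, X i) → Y) (a : ∀ i, X i)
    (hf : MapStronglySummingAt (𝕜 := 𝕜) q₁ 1 p₁ f a) :
    MapStronglySummingAt (𝕜 := 𝕜) q₂ (q₂ * p₁ / (q₁ * p₂)) p₂ f a :=
  stmt9_general p₁ p₂ q₁ q₂ hp₁ hq₁ hpq₁ hpq₂ hstar hlt f a hf
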